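/- arXiv:2507.10495 — 3 statements merged into one kernel-verified Lean document; each statement's English description precedes it below -/
import Mathlib

section
/- (Lemma 3.1.) There exists a constant C > 0, depending only on A, n, m₁ and m₂, such that for every solution u₁, u₂ of the system and all real numbers 0 < r₁ < r₂ with r₂ ≤ 2r₁ one has ∫_{B_{r₂}∖B_{r₁}} |u₁| dx ≥ C (r₂−r₁)^{m₁} ∫_{B_{r₁}} f₁(|u₂|) dx and ∫_{B_{r₂}∖B_{r₁}} |u₂| dx ≥ C (r₂−r₁)^{m₂} ∫_{B_{r₁}} f₂(|u₁|) dx. -/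
/-!
Test the inequality `∑ ∂^α a_α(x, u) ≥ F` against a cutoff `φ` with `φ = 1` on `B_{r₁}`,
`tsupport φ ⊆ B_{r₂}` and `∑_{|α| = m} |∂^α φ| ≤ K (r₂ - r₁)^{-m}` on the annulus. The left-hand
side dominates `∫_{B_{r₁}} F`, and the growth bound `|a_α(x, ζ)| ≤ A |ζ|` bounds the right-hand
side by `A K (r₂ - r₁)^{-m} ∫_{B_{r₂} \ B_{r₁}} |u|`. The cutoff is the indicator of a ball
mollified at scale `ε = (r₂ - r₁) / 3`; all derivatives fall on the mollifier, and rescaling a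
fixed bump shows that its `m`-th derivatives have `L¹` norm `O(ε^{-m})`.
-/

open MeasureTheory Real Set Filter

noncomputable section

/-- Euclidean space `ℝⁿ`. -/
abbrev En (n : ℕ) : Type := EuclideanSpace ℝ (Fin n)

/-- First-order partial derivative in the `i`-th coordinate direction. -/
def pderiv1 (n : ℕ) (i : Fin n) (φ : En n → ℝ) : En n → ℝ :=
  fun x => fderiv ℝ φ x (EuclideanSpace.single i 1)

/-- Higher-order partial derivative `∂^α` for a multi-index `α`. -/
def pderivMulti (n : ℕ) (α : Fin n → ℕ) (φ : En n → ℝ) : En n → ℝ :=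
  ((List.ofFn fun i : Fin n => (pderiv1 n i)^[α i]).foldr (· ∘ ·) id) φ

/-- The (finite) set of multi-indices `α` with `|α| = m`. -/
def multiIndices (n m : ℕ) : Finset (Fin n → ℕ) :=
  (Fintype.piFinset fun _ : Fin n => Finset.range (m + 1)).filter fun α => ∑ i, α i = m

/-- Caratheodory families `a_α`, `b_α` satisfying `|a_α(x,ζ)| + |b_α(x,ζ)| ≤ A|ζ|`. -/
def CaraBound (n : ℕ) (A : ℝ) (a b : (Fin n → ℕ) → En n → ℝ → ℝ) : Prop :=
  (∀ α ζ, Measurable fun x => a α x ζ) ∧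
  (∀ α ζ, Measurable fun x => b α x ζ) ∧
  (∀ α x, Continuous fun ζ => a α x ζ) ∧
  (∀ α x, Continuous fun ζ => b α x ζ) ∧
  (∀ α, ∀ᵐ x : En n ∂volume, ∀ ζ : ℝ, |a α x ζ| + |b α x ζ| ≤ A * |ζ|)

/-- `f : [0,∞) → [0,∞)` non-decreasing and convex. -/
def StdF (f : ℝ → ℝ) : Prop :=
  MonotoneOn f (Ici 0) ∧ ConvexOn ℝ (Ici 0) f ∧ ∀ ζ : ℝ, 0 ≤ ζ → 0 ≤ f ζ

/-- `g : [1,∞) → (0,∞)` non-decreasing, continuous, with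
`liminf_{ζ→∞} g(ζ^κ)/g(ζ) > 0` for every `κ ∈ (0,1)`. -/
def StdG (g : ℝ → ℝ) : Prop :=
  MonotoneOn g (Ici 1) ∧ ContinuousOn g (Ici 1) ∧ (∀ ζ : ℝ, 1 ≤ ζ → 0 < g ζ) ∧
  ∀ κ ∈ Ioo (0:ℝ) 1, ∃ ε > (0:ℝ), ∃ M ≥ (1:ℝ), ∀ ζ ≥ M, ε ≤ g (ζ ^ κ) / g ζ

/-- `h : (0,1] → (0,∞)` non-decreasing, continuous, with
`liminf_{ζ→0⁺} h(ζ)/h(ζ^κ) > 0` for every `κ ∈ (0,1)`. -/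
def StdH (h : ℝ → ℝ) : Prop :=
  MonotoneOn h (Ioc 0 1) ∧ ContinuousOn h (Ioc 0 1) ∧ (∀ ζ ∈ Ioc (0:ℝ) 1, 0 < h ζ) ∧
  ∀ κ ∈ Ioo (0:ℝ) 1, ∃ ε > (0:ℝ), ∃ δ ∈ Ioo (0:ℝ) 1, ∀ ζ ∈ Ioo (0:ℝ) δ, ε ≤ h ζ / h (ζ ^ κ)

/-- Weak solution of the system
`Σ_{|α|=m₁} ∂^α a_α(x,u₁) ≥ f₁(u₂)`, `Σ_{|α|=m₂} ∂^α b_α(x,u₂) ≥ f₂(u₁)` in `ℝⁿ`. -/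
def IsSolution (n m₁ m₂ : ℕ)
    (a b : (Fin n → ℕ) → En n → ℝ → ℝ) (f₁ f₂ : ℝ → ℝ)
    (u₁ u₂ : En n → ℝ) : Prop :=
  LocallyIntegrable u₁ volume ∧ LocallyIntegrable u₂ volume ∧
  LocallyIntegrable (fun x => f₁ |u₂ x|) volume ∧
  LocallyIntegrable (fun x => f₂ |u₁ x|) volume ∧
  ∀ φ : En n → ℝ, ContDiff ℝ (⊤ : ℕ∞) φ → HasCompactSupport φ → (∀ x, 0 ≤ φ x) →
    ((-1 : ℝ) ^ m₁ * ∫ x, ∑ α ∈ multiIndices n m₁, a α x (u₁ x) * pderivMulti n α φ x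
        ≥ ∫ x, f₁ |u₂ x| * φ x) ∧
    ((-1 : ℝ) ^ m₂ * ∫ x, ∑ α ∈ multiIndices n m₂, b α x (u₂ x) * pderivMulti n α φ x
        ≥ ∫ x, f₂ |u₁ x| * φ x)

open Metric
open scoped Convolution Topology

section PartialDerivatives

variable {n : ℕ}

def pderivList (n : ℕ) (l : List (Fin n)) (φ : En n → ℝ) : En n → ℝ :=
  l.foldr (pderiv1 n) φ

@[simp] lemma pderivList_nil (φ : En n → ℝ) : pderivList n [] φ = φ := rfl

@[simp] lemma pderivList_cons (i : Fin n) (l : List (Fin n)) (φ : En n → ℝ) :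
    pderivList n (i :: l) φ = pderiv1 n i (pderivList n l φ) := rfl

lemma pderivList_append (l₁ l₂ : List (Fin n)) (φ : En n → ℝ) :
    pderivList n (l₁ ++ l₂) φ = pderivList n l₁ (pderivList n l₂ φ) := by
  simp [pderivList, List.foldr_append]

lemma pderivList_replicate (k : ℕ) (i : Fin n) (φ : En n → ℝ) :
    pderivList n (List.replicate k i) φ = (pderiv1 n i)^[k] φ := by
  induction k with
  | zero => rfl
  | succ k ih => simp [List.replicate_succ, ih, Function.iterate_succ_apply']

def multiIndexDirs (α : Fin n → ℕ) : List (Fin n) :=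
  (List.ofFn fun i => List.replicate (α i) i).flatten

lemma length_multiIndexDirs (α : Fin n → ℕ) : (multiIndexDirs α).length = ∑ i, α i := by
  simp [multiIndexDirs, List.length_flatten, List.map_ofFn, Function.comp_def, List.sum_ofFn]

lemma pderivMulti_eq_pderivList (α : Fin n → ℕ) (φ : En n → ℝ) :
    pderivMulti n α φ = pderivList n (multiIndexDirs α) φ := by
  unfold pderivMulti multiIndexDirs
  rw [List.ofFn_eq_map, List.ofFn_eq_map]
  induction List.finRange n with
  | nil => rfl
  | cons i l ih =>
    simp only [List.map_cons, List.foldr_cons, List.flatten_cons, pderivList_append,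
      pderivList_replicate, Function.comp_apply, ih]

variable {ψ : En n → ℝ}

lemma ContDiff.pderiv1 (i : Fin n) (hψ : ContDiff ℝ (⊤ : ℕ∞) ψ) :
    ContDiff ℝ (⊤ : ℕ∞) (pderiv1 n i ψ) :=
  (hψ.fderiv_right (m := (⊤ : ℕ∞)) le_rfl).clm_apply contDiff_const

lemma ContDiff.pderivList (l : List (Fin n)) (hψ : ContDiff ℝ (⊤ : ℕ∞) ψ) :
    ContDiff ℝ (⊤ : ℕ∞) (pderivList n l ψ) := by
  induction l with
  | nil => exact hψ
  | cons i l ih => exact ih.pderiv1 i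

lemma HasCompactSupport.pderivList (l : List (Fin n)) (hψ : HasCompactSupport ψ) :
    HasCompactSupport (pderivList n l ψ) := by
  induction l with
  | nil => exact hψ
  | cons i l ih => exact ih.fderiv_apply ℝ _

lemma pderiv1_eventuallyEq_zero {x : En n} {d : ℝ} (i : Fin n) (h : ψ =ᶠ[𝓝 x] fun _ => d) :
    pderiv1 n i ψ =ᶠ[𝓝 x] 0 :=
  h.eventuallyEq_nhds.mono fun y hy => by simp [pderiv1, hy.fderiv_eq]

lemma pderivList_eventuallyEq_zero {x : En n} {d : ℝ} {l : List (Fin n)} (hl : l ≠ [])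
    (h : ψ =ᶠ[𝓝 x] fun _ => d) : pderivList n l ψ =ᶠ[𝓝 x] 0 := by
  induction l with
  | nil => exact absurd rfl hl
  | cons i l ih =>
    rcases eq_or_ne l [] with rfl | hl'
    · exact pderiv1_eventuallyEq_zero i h
    · exact pderiv1_eventuallyEq_zero i (ih hl')

lemma pderivMulti_eventuallyEq_zero {x : En n} {d : ℝ} {α : Fin n → ℕ} (hα : ∑ i, α i ≠ 0)
    (h : ψ =ᶠ[𝓝 x] fun _ => d) : pderivMulti n α ψ =ᶠ[𝓝 x] 0 := by
  rw [pderivMulti_eq_pderivList]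
  refine pderivList_eventuallyEq_zero (fun hnil => hα ?_) h
  rw [← length_multiIndexDirs, hnil, List.length_nil]

lemma pderiv1_convolution {f : En n → ℝ} (i : Fin n) (hf : LocallyIntegrable f)
    (hψ : ContDiff ℝ (⊤ : ℕ∞) ψ) (hψc : HasCompactSupport ψ) :
    pderiv1 n i (f ⋆[ContinuousLinearMap.lsmul ℝ ℝ] ψ) =
      f ⋆[ContinuousLinearMap.lsmul ℝ ℝ] pderiv1 n i ψ := by
  ext x
  have hd := hψc.hasFDerivAt_convolution_right (ContinuousLinearMap.lsmul ℝ ℝ) hf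
    (hψ.of_le (by simp)) x
  have := convolution_precompR_apply (L := ContinuousLinearMap.lsmul ℝ ℝ) hf (hψc.fderiv ℝ)
    (hψ.continuous_fderiv (by simp)) x (EuclideanSpace.single i 1)
  simp only [pderiv1, hd.fderiv, this]
  rfl

lemma pderivList_convolution {f : En n → ℝ} (l : List (Fin n)) (hf : LocallyIntegrable f)
    (hψ : ContDiff ℝ (⊤ : ℕ∞) ψ) (hψc : HasCompactSupport ψ) :
    pderivList n l (f ⋆[ContinuousLinearMap.lsmul ℝ ℝ] ψ) =
      f ⋆[ContinuousLinearMap.lsmul ℝ ℝ] pderivList n l ψ := by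
  induction l with
  | nil => rfl
  | cons i l ih =>
    rw [pderivList_cons, ih, pderiv1_convolution i hf (hψ.pderivList l) (hψc.pderivList l)]
    rfl

lemma pderiv1_const_mul (i : Fin n) (hψ : ContDiff ℝ (⊤ : ℕ∞) ψ) (a : ℝ) :
    pderiv1 n i (fun x => a * ψ x) = fun x => a * pderiv1 n i ψ x := by
  ext x
  simp [pderiv1, fderiv_const_mul (hψ.differentiable (by simp) x)]

lemma pderiv1_comp_smul (i : Fin n) (hψ : ContDiff ℝ (⊤ : ℕ∞) ψ) (c : ℝ) :
    pderiv1 n i (fun x => ψ (c • x)) = fun x => c * pderiv1 n i ψ (c • x) := by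
  ext x
  have hcomp := ((hψ.differentiable (by simp) (c • x)).hasFDerivAt).comp x
    ((hasFDerivAt_id x).const_smul c)
  rw [pderiv1, show (fun y => ψ (c • y)) = ψ ∘ (c • ·) from rfl, hcomp.fderiv]
  simp [pderiv1]

lemma pderivList_comp_smul (l : List (Fin n)) (hψ : ContDiff ℝ (⊤ : ℕ∞) ψ) (c : ℝ) :
    pderivList n l (fun x => ψ (c • x)) = fun x => c ^ l.length * pderivList n l ψ (c • x) := by
  induction l with
  | nil => simp
  | cons i l ih =>
    have hl := hψ.pderivList l
    rw [pderivList_cons, ih, pderiv1_const_mul i (ψ := fun x => pderivList n l ψ (c • x))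
      (hl.comp (contDiff_const_smul c)),
      pderiv1_comp_smul i hl c]
    ext x
    simp only [List.length_cons, pderivList_cons, pow_succ]
    ring

end PartialDerivatives

lemma abs_convolution_le {G : Type*} [NormedAddCommGroup G] [MeasurableSpace G]
    [MeasurableAdd₂ G] [MeasurableNeg G] {μ : Measure G} [μ.IsAddLeftInvariant]
    [μ.IsNegInvariant] [SFinite μ] {f g : G → ℝ} {M : ℝ} (hf : ∀ t, |f t| ≤ M)
    (hg : Integrable g μ) (x : G) :
    |(f ⋆[ContinuousLinearMap.lsmul ℝ ℝ, μ] g) x| ≤ M * ∫ t, |g t| ∂μ := calc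
  _ ≤ ∫ t, |f t| * |g (x - t)| ∂μ := by
    simpa [convolution_def, abs_mul] using
      norm_integral_le_integral_norm (μ := μ) fun t => f t * g (x - t)
  _ ≤ ∫ t, M * |g (x - t)| ∂μ :=
    integral_mono_of_nonneg (.of_forall fun _ => by positivity)
      ((hg.comp_sub_left x).abs.const_mul M)
      (.of_forall fun t => mul_le_mul_of_nonneg_right (hf t) (abs_nonneg _))
  _ = M * ∫ t, |g t| ∂μ := by
    rw [integral_const_mul, integral_sub_left_eq_self (fun t => |g t|) μ x]

section Cutoff

variable (n : ℕ)

def unitBump : ContDiffBump (0 : En n) := ⟨1 / 2, 1, by norm_num, by norm_num⟩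

def scaledBump (ε : ℝ) (x : En n) : ℝ := unitBump n (ε⁻¹ • x)

def mollifiedBallIndicator (c ε : ℝ) : En n → ℝ :=
  (ball (0 : En n) c).indicator (fun _ => (∫ y, scaledBump n ε y)⁻¹)
    ⋆[ContinuousLinearMap.lsmul ℝ ℝ] scaledBump n ε

variable {n} {c ε : ℝ}

lemma contDiff_scaledBump (ε : ℝ) : ContDiff ℝ (⊤ : ℕ∞) (scaledBump n ε) :=
  (unitBump n).contDiff.comp (contDiff_const_smul _)

lemma scaledBump_nonneg (ε : ℝ) (x : En n) : 0 ≤ scaledBump n ε x := (unitBump n).nonneg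

lemma scaledBump_eq_zero (hε : 0 < ε) {x : En n} (hx : ε ≤ ‖x‖) : scaledBump n ε x = 0 := by
  refine (unitBump n).zero_of_le_dist ?_
  rw [dist_zero_right, norm_smul, norm_inv, Real.norm_of_nonneg hε.le]
  exact (le_inv_mul_iff₀ hε).2 (by simpa [unitBump] using hx)

lemma hasCompactSupport_scaledBump (hε : 0 < ε) : HasCompactSupport (scaledBump n ε) :=
  .intro (isCompact_closedBall 0 ε) fun x hx =>
    scaledBump_eq_zero hε (by simp at hx; exact hx.le)

lemma integral_scaledBump (hε : 0 ≤ ε) :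
    ∫ x, scaledBump n ε x = ε ^ n * ∫ x, unitBump n x := by
  simp [scaledBump, Measure.integral_comp_inv_smul_of_nonneg volume _ hε]

lemma integral_abs_pderivList_scaledBump (hε : 0 ≤ ε) (l : List (Fin n)) :
    ∫ x, |pderivList n l (scaledBump n ε) x| =
      ε ^ n * ε⁻¹ ^ l.length * ∫ x, |pderivList n l (unitBump n) x| := by
  unfold scaledBump
  rw [pderivList_comp_smul l (unitBump n).contDiff]
  simp_rw [abs_mul, abs_pow, abs_inv, abs_of_nonneg hε]
  rw [integral_const_mul,
    Measure.integral_comp_inv_smul_of_nonneg volume (fun y => |pderivList n l (unitBump n) y|) hε,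
    finrank_euclideanSpace_fin, smul_eq_mul]
  ring

lemma integral_scaledBump_pos (hε : 0 < ε) : 0 < ∫ x, scaledBump n ε x := by
  rw [integral_scaledBump hε.le]
  exact mul_pos (pow_pos hε n) (unitBump n).integral_pos

lemma locallyIntegrable_ballIndicator (c a : ℝ) :
    LocallyIntegrable ((ball (0 : En n) c).indicator fun _ => a) :=
  (locallyIntegrable_const a).indicator measurableSet_ball

lemma contDiff_mollifiedBallIndicator (hε : 0 < ε) :
    ContDiff ℝ (⊤ : ℕ∞) (mollifiedBallIndicator n c ε) :=
  (hasCompactSupport_scaledBump hε).contDiff_convolution_right _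
    (locallyIntegrable_ballIndicator c _) (contDiff_scaledBump ε)

lemma mollifiedBallIndicator_nonneg : 0 ≤ mollifiedBallIndicator n c ε := fun _ =>
  integral_nonneg fun t => mul_nonneg
    (indicator_nonneg (fun _ _ => inv_nonneg.2 (integral_nonneg (scaledBump_nonneg ε))) t)
    (scaledBump_nonneg ε _)

lemma mollifiedBallIndicator_eqOn_one (hε : 0 < ε) :
    EqOn (mollifiedBallIndicator n c ε) 1 (ball 0 (c - ε)) := by
  intro x hx
  have key : ∀ t, (ball (0 : En n) c).indicator (fun _ => (∫ y, scaledBump n ε y)⁻¹) t *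
      scaledBump n ε (x - t) = (∫ y, scaledBump n ε y)⁻¹ * scaledBump n ε (x - t) := by
    intro t
    by_cases ht : t ∈ ball (0 : En n) c
    · rw [indicator_of_mem ht]
    · rw [indicator_of_notMem ht, scaledBump_eq_zero hε, mul_zero, mul_zero]
      rw [mem_ball_zero_iff] at hx ht
      linarith [norm_sub_norm_le t x, norm_sub_rev t x]
  simp only [mollifiedBallIndicator, convolution_def, ContinuousLinearMap.lsmul_apply,
    smul_eq_mul, key]
  rw [integral_const_mul, integral_sub_left_eq_self (scaledBump n ε) volume x,
    inv_mul_cancel₀ (integral_scaledBump_pos hε).ne', Pi.one_apply]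

lemma support_mollifiedBallIndicator_subset (hε : 0 < ε) :
    Function.support (mollifiedBallIndicator n c ε) ⊆ ball 0 (c + ε) := by
  refine (support_convolution_subset _).trans ?_
  rintro _ ⟨s, hs, t, ht, rfl⟩
  have hs : ‖s‖ < c := by simpa using support_indicator_subset hs
  have ht : ‖t‖ < ε := not_le.1 fun h => ht (scaledBump_eq_zero hε h)
  rw [mem_ball_zero_iff]
  exact (norm_add_le s t).trans_lt (add_lt_add hs ht)

lemma abs_pderivMulti_mollifiedBallIndicator_le (hε : 0 < ε) (α : Fin n → ℕ) (x : En n) :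
    |pderivMulti n α (mollifiedBallIndicator n c ε) x| ≤
      ε⁻¹ ^ (∑ i, α i) * ((∫ y, |pderivMulti n α (unitBump n) y|) / ∫ y, unitBump n y) := by
  simp only [pderivMulti_eq_pderivList, ← length_multiIndexDirs]
  have hI : 0 ≤ (∫ y, scaledBump n ε y)⁻¹ := inv_nonneg.2 (integral_nonneg (scaledBump_nonneg ε))
  rw [mollifiedBallIndicator, pderivList_convolution _ (locallyIntegrable_ballIndicator c _)
    (contDiff_scaledBump ε) (hasCompactSupport_scaledBump hε)]
  have hint : Integrable (pderivList n (multiIndexDirs α) (scaledBump n ε)) :=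
    ((contDiff_scaledBump ε).pderivList _).continuous.integrable_of_hasCompactSupport
      ((hasCompactSupport_scaledBump hε).pderivList _)
  refine (abs_convolution_le (M := (∫ y, scaledBump n ε y)⁻¹) (fun t => ?_) hint x).trans_eq ?_
  · by_cases ht : t ∈ ball (0 : En n) c <;> simp [ht, abs_of_nonneg hI, hI]
  · rw [integral_abs_pderivList_scaledBump hε.le, integral_scaledBump hε.le]
    have := (unitBump n).integral_pos (μ := volume)
    field_simp

end Cutoff

lemma exists_annulus_cutoff (n : ℕ) {m : ℕ} (hm : m ≠ 0) :
    ∃ K > 0, ∀ r₁ r₂ : ℝ, r₁ < r₂ → ∃ φ : En n → ℝ, ContDiff ℝ (⊤ : ℕ∞) φ ∧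
      HasCompactSupport φ ∧ 0 ≤ φ ∧ EqOn φ 1 (ball 0 r₁) ∧
      ∀ x, ∑ α ∈ multiIndices n m, |pderivMulti n α φ x| ≤
        K / (r₂ - r₁) ^ m * (ball (0 : En n) r₂ \ ball 0 r₁).indicator 1 x := by
  set I := ∫ y, unitBump n y
  set J := ∑ α ∈ multiIndices n m, ∫ y, |pderivMulti n α (unitBump n) y|
  have hI : 0 < I := (unitBump n).integral_pos
  have hJ : 0 ≤ J := Finset.sum_nonneg fun _ _ => integral_nonneg fun _ => abs_nonneg _
  refine ⟨3 ^ m * (J + 1) / I, by positivity, fun r₁ r₂ hr => ?_⟩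
  -- Mollifying at scale `(r₂ - r₁) / 3` keeps `tsupport φ` inside the open ball `B_{r₂}`, so the
  -- derivatives of `φ` vanish on the sphere of radius `r₂` as well.
  set ε := (r₂ - r₁) / 3
  have hε : 0 < ε := div_pos (sub_pos.2 hr) three_pos
  have hr₂ : r₂ = r₁ + 3 * ε := by simp only [ε]; ring
  set φ := mollifiedBallIndicator n (r₁ + ε) ε
  have hφ₁ : EqOn φ 1 (ball 0 r₁) := by
    simpa using mollifiedBallIndicator_eqOn_one (n := n) (c := r₁ + ε) hε
  have hsupp : tsupport φ ⊆ ball 0 r₂ :=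
    (closure_mono (support_mollifiedBallIndicator_subset hε)).trans
      (closure_ball_subset_closedBall.trans (closedBall_subset_ball (by linarith)))
  refine ⟨φ, contDiff_mollifiedBallIndicator hε,
    (isCompact_closedBall 0 r₂).of_isClosed_subset (isClosed_tsupport _)
      (hsupp.trans ball_subset_closedBall),
    mollifiedBallIndicator_nonneg, hφ₁, fun x => ?_⟩
  by_cases hx : x ∈ ball (0 : En n) r₂ \ ball 0 r₁
  · rw [indicator_of_mem hx, Pi.one_apply, mul_one]
    calc ∑ α ∈ multiIndices n m, |pderivMulti n α φ x|
        ≤ ∑ α ∈ multiIndices n m,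
            ε⁻¹ ^ m * ((∫ y, |pderivMulti n α (unitBump n) y|) / I) :=
          Finset.sum_le_sum fun α hα => (Finset.mem_filter.1 hα).2 ▸
            abs_pderivMulti_mollifiedBallIndicator_le hε α x
      _ = ε⁻¹ ^ m * (J / I) := by rw [Finset.sum_div, Finset.mul_sum]
      _ ≤ ε⁻¹ ^ m * ((J + 1) / I) := by gcongr; linarith
      _ = 3 ^ m * (J + 1) / I / (r₂ - r₁) ^ m := by
          simp only [ε, inv_div, div_pow]
          ring
  · rw [indicator_of_notMem hx, mul_zero]
    refine (Finset.sum_eq_zero fun α hα => ?_).le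
    have hα : ∑ i, α i ≠ 0 := (Finset.mem_filter.1 hα).2 ▸ hm
    rw [abs_eq_zero]
    by_cases hx₁ : x ∈ ball (0 : En n) r₁
    · refine (pderivMulti_eventuallyEq_zero (d := 1) hα ?_).eq_of_nhds
      exact eventuallyEq_of_mem (isOpen_ball.mem_nhds hx₁) hφ₁
    · have hx₂ : x ∉ tsupport φ := fun h => hx ⟨hsupp h, hx₁⟩
      exact (pderivMulti_eventuallyEq_zero (d := 0) hα
        (notMem_tsupport_iff_eventuallyEq.1 hx₂)).eq_of_nhds

lemma setIntegral_le_of_cutoff {n m : ℕ} {S : Finset (Fin n → ℕ)}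
    {a : (Fin n → ℕ) → En n → ℝ → ℝ} {A B : ℝ} {F u φ : En n → ℝ} {s T : Set (En n)}
    (ha : ∀ α, ∀ᵐ x, ∀ ζ, |a α x ζ| ≤ A * |ζ|) (hA : 0 ≤ A)
    (hu : LocallyIntegrable u) (hF : LocallyIntegrable F) (hF₀ : 0 ≤ F)
    (hs : MeasurableSet s) (hT : MeasurableSet T) (hTb : Bornology.IsBounded T)
    (hφ : Continuous φ) (hφc : HasCompactSupport φ) (hφ₀ : 0 ≤ φ) (hφs : EqOn φ 1 s)
    (hφd : ∀ x, ∑ α ∈ S, |pderivMulti n α φ x| ≤ B * T.indicator 1 x)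
    (hsol : ∫ x, F x * φ x ≤ (-1) ^ m * ∫ x, ∑ α ∈ S, a α x (u x) * pderivMulti n α φ x) :
    ∫ x in s, F x ≤ A * B * ∫ x in T, |u x| := by
  have hTu : IntegrableOn (fun x => |u x|) T :=
    ((hu.integrableOn_isCompact hTb.isCompact_closure).mono_set subset_closure).norm
  have hdom : ∀ᵐ x, |∑ α ∈ S, a α x (u x) * pderivMulti n α φ x| ≤
      T.indicator (fun x => A * B * |u x|) x := by
    filter_upwards [ae_all_iff.2 ha] with x hx
    calc |∑ α ∈ S, a α x (u x) * pderivMulti n α φ x|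
        ≤ ∑ α ∈ S, |a α x (u x)| * |pderivMulti n α φ x| := by
          simpa only [abs_mul] using
            Finset.abs_sum_le_sum_abs (fun α => a α x (u x) * pderivMulti n α φ x) S
      _ ≤ ∑ α ∈ S, A * |u x| * |pderivMulti n α φ x| := by gcongr with α; exact hx α (u x)
      _ = A * |u x| * ∑ α ∈ S, |pderivMulti n α φ x| := (Finset.mul_sum _ _ _).symm
      _ ≤ A * |u x| * (B * T.indicator 1 x) := by gcongr; exact hφd x
      _ = T.indicator (fun x => A * B * |u x|) x := by
          by_cases hxT : x ∈ T <;> simp [hxT]; ring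
  calc ∫ x in s, F x = ∫ x, s.indicator F x := (integral_indicator hs).symm
    _ ≤ ∫ x, F x * φ x := by
        refine integral_mono_of_nonneg (.of_forall (indicator_nonneg fun x _ => hF₀ x))
          (hF.integrable_smul_right_of_hasCompactSupport hφ hφc) (.of_forall fun x => ?_)
        by_cases hxs : x ∈ s
        · simp [hxs, hφs hxs]
        · simpa [hxs] using mul_nonneg (hF₀ x) (hφ₀ x)
    _ ≤ (-1) ^ m * ∫ x, ∑ α ∈ S, a α x (u x) * pderivMulti n α φ x := hsol
    _ ≤ ∫ x, |∑ α ∈ S, a α x (u x) * pderivMulti n α φ x| := by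
        refine (le_abs_self _).trans ?_
        rw [abs_mul, abs_pow, abs_neg, abs_one, one_pow, one_mul]
        exact abs_integral_le_integral_abs
    _ ≤ ∫ x, T.indicator (fun x => A * B * |u x|) x :=
        integral_mono_of_nonneg (.of_forall fun _ => abs_nonneg _)
          (IntegrableOn.integrable_indicator (hTu.const_mul (A * B)) hT) hdom
    _ = A * B * ∫ x in T, |u x| := by rw [integral_indicator hT, integral_const_mul]

def IsWeakSupersolution (n m : ℕ) (a : (Fin n → ℕ) → En n → ℝ → ℝ) (F u : En n → ℝ) : Prop :=
  ∀ φ : En n → ℝ, ContDiff ℝ (⊤ : ℕ∞) φ → HasCompactSupport φ → (∀ x, 0 ≤ φ x) →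
    ∫ x, F x * φ x ≤
      (-1 : ℝ) ^ m * ∫ x, ∑ α ∈ multiIndices n m, a α x (u x) * pderivMulti n α φ x

lemma exists_annulus_estimate (n : ℕ) {m : ℕ} (hm : m ≠ 0) {A : ℝ} (hA : 0 < A) :
    ∃ C > 0, ∀ a : (Fin n → ℕ) → En n → ℝ → ℝ, (∀ α, ∀ᵐ x, ∀ ζ, |a α x ζ| ≤ A * |ζ|) →
      ∀ F u : En n → ℝ, LocallyIntegrable u → LocallyIntegrable F → 0 ≤ F →
      IsWeakSupersolution n m a F u → ∀ r₁ r₂ : ℝ, r₁ < r₂ →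
        C * (r₂ - r₁) ^ m * ∫ x in ball 0 r₁, F x ≤ ∫ x in ball 0 r₂ \ ball 0 r₁, |u x| := by
  obtain ⟨K, hK, hcut⟩ := exists_annulus_cutoff n hm
  refine ⟨(A * K)⁻¹, by positivity, fun a ha F u hu hF hF₀ hsol r₁ r₂ hr => ?_⟩
  obtain ⟨φ, hφ, hφc, hφ₀, hφ₁, hφd⟩ := hcut r₁ r₂ hr
  have hest := setIntegral_le_of_cutoff ha hA.le hu hF hF₀ measurableSet_ball
    (measurableSet_ball.diff measurableSet_ball) (isBounded_ball.subset sdiff_subset)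
    hφ.continuous hφc hφ₀ hφ₁ hφd (hsol φ hφ hφc hφ₀)
  have hr' : 0 < (r₂ - r₁) ^ m := pow_pos (sub_pos.2 hr) m
  calc (A * K)⁻¹ * (r₂ - r₁) ^ m * ∫ x in ball 0 r₁, F x
      ≤ (A * K)⁻¹ * (r₂ - r₁) ^ m * (A * (K / (r₂ - r₁) ^ m) *
          ∫ x in ball 0 r₂ \ ball 0 r₁, |u x|) := by gcongr
    _ = ∫ x in ball 0 r₂ \ ball 0 r₁, |u x| := by field_simp

theorem lemma_3_1_general
    (n m₁ m₂ : ℕ) (hm₁ : 0 < m₁) (hm₂ : 0 < m₂)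
    (A : ℝ) (hA : 0 < A) :
    ∃ C > (0:ℝ),
      ∀ (a b : (Fin n → ℕ) → En n → ℝ → ℝ) (f₁ f₂ : ℝ → ℝ),
        CaraBound n A a b → StdF f₁ → StdF f₂ →
        ∀ u₁ u₂ : En n → ℝ, IsSolution n m₁ m₂ a b f₁ f₂ u₁ u₂ →
        ∀ r₁ r₂ : ℝ, 0 < r₁ → r₁ < r₂ → r₂ ≤ 2 * r₁ →
          (C * (r₂ - r₁) ^ m₁ * ∫ x in Metric.ball (0 : En n) r₁, f₁ |u₂ x| ≤
            ∫ x in Metric.ball (0 : En n) r₂ \ Metric.ball (0 : En n) r₁, |u₁ x|) ∧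
          (C * (r₂ - r₁) ^ m₂ * ∫ x in Metric.ball (0 : En n) r₁, f₂ |u₁ x| ≤
            ∫ x in Metric.ball (0 : En n) r₂ \ Metric.ball (0 : En n) r₁, |u₂ x|) := by
  obtain ⟨C₁, hC₁, hest₁⟩ := exists_annulus_estimate n hm₁.ne' hA
  obtain ⟨C₂, hC₂, hest₂⟩ := exists_annulus_estimate n hm₂.ne' hA
  refine ⟨min C₁ C₂, lt_min hC₁ hC₂, ?_⟩
  rintro a b f₁ f₂ ⟨-, -, -, -, hab⟩ hf₁ hf₂ u₁ u₂ ⟨hu₁, hu₂, hF₁, hF₂, hsol⟩ r₁ r₂ - hr -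
  have hF₁₀ : 0 ≤ fun x => f₁ |u₂ x| := fun x => hf₁.2.2 _ (abs_nonneg _)
  have hF₂₀ : 0 ≤ fun x => f₂ |u₁ x| := fun x => hf₂.2.2 _ (abs_nonneg _)
  have hr' : 0 ≤ r₂ - r₁ := (sub_pos.2 hr).le
  constructor
  · refine le_trans ?_ <| hest₁ a (fun α => (hab α).mono fun x hx ζ =>
      (le_add_of_nonneg_right (abs_nonneg _)).trans (hx ζ)) _ u₁ hu₁ hF₁ hF₁₀
      (fun φ h₁ h₂ h₃ => (hsol φ h₁ h₂ h₃).1) r₁ r₂ hr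
    gcongr
    exacts [setIntegral_nonneg measurableSet_ball fun x _ => hF₁₀ x, min_le_left _ _]
  · refine le_trans ?_ <| hest₂ b (fun α => (hab α).mono fun x hx ζ =>
      (le_add_of_nonneg_left (abs_nonneg _)).trans (hx ζ)) _ u₂ hu₂ hF₂ hF₂₀
      (fun φ h₁ h₂ h₃ => (hsol φ h₁ h₂ h₃).2) r₁ r₂ hr
    gcongr
    exacts [setIntegral_nonneg measurableSet_ball fun x _ => hF₂₀ x, min_le_right _ _]

/-- **Lemma 3.1.** There is a constant `C > 0`, depending only on `A`, `n`, `m₁`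
and `m₂`, such that for every solution of the system and all `0 < r₁ < r₂ ≤ 2r₁`
the annulus estimates (3.1) and (3.2) hold. -/
theorem lemma_3_1
    (n m₁ m₂ : ℕ) (hn : 0 < n) (hm₁ : 0 < m₁) (hm₂ : 0 < m₂)
    (A : ℝ) (hA : 0 < A) :
    ∃ C > (0:ℝ),
      ∀ (a b : (Fin n → ℕ) → En n → ℝ → ℝ) (f₁ f₂ : ℝ → ℝ),
        CaraBound n A a b → StdF f₁ → StdF f₂ →
        ∀ u₁ u₂ : En n → ℝ, IsSolution n m₁ m₂ a b f₁ f₂ u₁ u₂ →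
        ∀ r₁ r₂ : ℝ, 0 < r₁ → r₁ < r₂ → r₂ ≤ 2 * r₁ →
          (C * (r₂ - r₁) ^ m₁ * ∫ x in Metric.ball (0 : En n) r₁, f₁ |u₂ x| ≤
            ∫ x in Metric.ball (0 : En n) r₂ \ Metric.ball (0 : En n) r₁, |u₁ x|) ∧
          (C * (r₂ - r₁) ^ m₂ * ∫ x in Metric.ball (0 : En n) r₁, f₂ |u₁ x| ≤
            ∫ x in Metric.ball (0 : En n) r₂ \ Metric.ball (0 : En n) r₁, |u₂ x|) :=
  lemma_3_1_general n m₁ m₂ hm₁ hm₂ A hA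
end
end

section
/- (Lemma 3.3, first inequality.) Let g : [1,∞) → (0,∞) be a non-decreasing continuous function such that liminf_{ζ→∞} g(ζ^κ)/g(ζ) > 0 for every κ ∈ (0,1). Then there exist constants C > 0 and σ > 0 such that g(ζ) ≤ C (log ζ)^σ for all ζ ∈ [e,∞). -/
open MeasureTheory Real Set Filter

noncomputable section

/-! In the variable `t = log ζ`, the hypothesis for `κ = 1/2` says that `G = g ∘ exp` grows at
most by a fixed factor `K` when its argument doubles. Iterating this `log₂ (t / T)` times down to
a fixed threshold `T` gives `G t ≤ G T · t ^ log₂ K`, i.e. `g ζ ≤ C (log ζ) ^ σ`. -/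

theorem rpow_logb_mul_div_rpow {q K : ℝ} (hq : 1 < q) (hK : 0 < K) {t : ℝ} (ht : 0 ≤ t) :
    K * (t / q) ^ logb q K = t ^ logb q K := by
  have hq0 : 0 < q := zero_lt_one.trans hq
  rw [div_rpow ht hq0.le, rpow_logb hq0 hq.ne' hK]
  field_simp

theorem le_mul_rpow_logb_of_le_mul_div {G : ℝ → ℝ} {q K T : ℝ} (hq : 1 < q) (hK : 1 ≤ K)
    (hT : q ≤ T) (hmono : MonotoneOn G (Ici 1)) (hGT : 0 ≤ G T)
    (hgrowth : ∀ t ≥ T, G t ≤ K * G (t / q)) :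
    ∀ t ≥ 1, G t ≤ G T * t ^ logb q K := by
  have hq0 : 0 < q := zero_lt_one.trans hq
  have hT1 : 1 ≤ T := hq.le.trans hT
  have hσ : 0 ≤ logb q K := logb_nonneg hq hK
  suffices h : ∀ n : ℕ, ∀ t, 1 ≤ t → t ≤ q ^ n * T → G t ≤ G T * t ^ logb q K by
    intro t ht
    obtain ⟨n, hn⟩ := pow_unbounded_of_one_lt (t / T) hq
    exact h n t ht ((div_le_iff₀ (by linarith)).mp hn.le)
  intro n
  induction n with
  | zero =>
    intro t ht htT
    rw [pow_zero, one_mul] at htT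
    calc G t ≤ G T := hmono ht hT1 htT
      _ ≤ G T * t ^ logb q K := le_mul_of_one_le_right hGT (one_le_rpow ht hσ)
  | succ n ih =>
    intro t ht htT
    rcases le_total t T with htT' | hTt
    · exact ih t ht (htT'.trans (le_mul_of_one_le_left (by linarith) (one_le_pow₀ hq.le)))
    have hdiv : 1 ≤ t / q := (one_le_div hq0).mpr (hT.trans hTt)
    have hdivT : t / q ≤ q ^ n * T := by
      rwa [div_le_iff₀ hq0, mul_right_comm, ← pow_succ]
    calc G t ≤ K * G (t / q) := hgrowth t hTt
      _ ≤ K * (G T * (t / q) ^ logb q K) := by gcongr; exact ih _ hdiv hdivT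
      _ = G T * (K * (t / q) ^ logb q K) := by ring
      _ = G T * t ^ logb q K := by rw [rpow_logb_mul_div_rpow hq (by linarith) (by linarith)]

theorem lemma_3_3_first_general
    (g : ℝ → ℝ) (hmono : MonotoneOn g (Ici 1))
    (hpos : ∀ ζ : ℝ, 1 ≤ ζ → 0 < g ζ)
    (hliminf : ∀ κ ∈ Ioo (0:ℝ) 1, ∃ ε > (0:ℝ), ∃ M ≥ (1:ℝ),
      ∀ ζ ≥ M, ε ≤ g (ζ ^ κ) / g ζ) :
    ∃ C > (0:ℝ), ∃ σ > (0:ℝ), ∀ ζ ≥ Real.exp 1, g ζ ≤ C * Real.log ζ ^ σ := by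
  obtain ⟨ε, hε, M, hM, hεM⟩ := hliminf (1 / 2) ⟨by norm_num, by norm_num⟩
  set K := max ε⁻¹ 2
  set T := max (log M) 2
  have hK : 2 ≤ K := le_max_right _ _
  have hT : 2 ≤ T := le_max_right _ _
  have hGmono : MonotoneOn (g ∘ exp) (Ici 1) := fun s hs t ht hst =>
    hmono (one_le_exp (zero_le_one.trans hs)) (one_le_exp (zero_le_one.trans ht))
      (exp_le_exp.mpr hst)
  have hgrowth : ∀ t ≥ T, (g ∘ exp) t ≤ K * (g ∘ exp) (t / 2) := by
    intro t ht
    have hMt : M ≤ exp t := (le_exp_log M).trans (exp_le_exp.mpr (le_trans (le_max_left _ _) ht))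
    have hratio := hεM _ hMt
    rw [← exp_mul, mul_one_div, le_div_iff₀ (hpos _ (hM.trans hMt))] at hratio
    have hhalf : 0 < g (exp (t / 2)) := hpos _ (one_le_exp (by linarith))
    calc g (exp t) ≤ ε⁻¹ * g (exp (t / 2)) := by rw [inv_mul_eq_div, le_div_iff₀' hε]; exact hratio
      _ ≤ K * g (exp (t / 2)) := by gcongr; exact le_max_left _ _
  refine ⟨g (exp T), hpos _ (one_le_exp (by linarith)), logb 2 K,
    logb_pos one_lt_two (by linarith), fun ζ hζ => ?_⟩
  have hζ0 : 0 < ζ := (exp_pos 1).trans_le hζ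
  have hlog : 1 ≤ log ζ := by rwa [le_log_iff_exp_le hζ0]
  simpa [exp_log hζ0] using le_mul_rpow_logb_of_le_mul_div (G := g ∘ exp) one_lt_two
    (by linarith) hT hGmono (hpos _ (one_le_exp (by linarith))).le hgrowth (log ζ) hlog

/-- **Lemma 3.3**, first inequality: a non-decreasing continuous
`g : [1,∞) → (0,∞)` with `liminf_{ζ→∞} g(ζ^κ)/g(ζ) > 0` for every `κ ∈ (0,1)`
grows at most logarithmically. -/
theorem lemma_3_3_first
    (g : ℝ → ℝ) (hmono : MonotoneOn g (Ici 1)) (hcont : ContinuousOn g (Ici 1))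
    (hpos : ∀ ζ : ℝ, 1 ≤ ζ → 0 < g ζ)
    (hliminf : ∀ κ ∈ Ioo (0:ℝ) 1, ∃ ε > (0:ℝ), ∃ M ≥ (1:ℝ),
      ∀ ζ ≥ M, ε ≤ g (ζ ^ κ) / g ζ) :
    ∃ C > (0:ℝ), ∃ σ > (0:ℝ), ∀ ζ ≥ Real.exp 1, g ζ ≤ C * Real.log ζ ^ σ :=
  lemma_3_3_first_general g hmono hpos hliminf
end
end

section
/- (Lemma 3.3, second inequality.) Let h : (0,1] → (0,∞) be a non-decreasing continuous function such that liminf_{ζ→0⁺} h(ζ)/h(ζ^κ) > 0 for every κ ∈ (0,1). Then there exist constants C > 0 and σ > 0 such that h(1/ζ) ≥ C (log ζ)^{−σ} for all ζ ∈ [e,∞). -/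
open MeasureTheory Real Set Filter

noncomputable section

/-! In the variable `y = -log ζ` the hypothesis for `κ = 1/2` says that `g y = h (exp (-y))`
satisfies `g (2 * y) ≥ ε * g y` for large `y`. Iterating this along `y, 2y, 4y, …`, with the
monotonicity of `g` in between, gives `g y ≥ C * y ^ (-σ)` where `2 ^ (-σ) ≤ ε`. -/

theorem mul_rpow_neg_le_of_le_comp_mul {g : ℝ → ℝ} {b σ L : ℝ} (hb : 1 < b) (hσ : 0 ≤ σ)
    (hL : 1 ≤ L) (hgL : 0 ≤ g L) (hg : AntitoneOn g (Ici 1))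
    (hdoubling : ∀ y ≥ L, b ^ (-σ) * g y ≤ g (b * y)) :
    ∀ y ≥ 1, b ^ (-σ) * g L * y ^ (-σ) ≤ g y := by
  have hb0 : 0 < b := zero_lt_one.trans hb
  have hC : 0 ≤ b ^ (-σ) * g L := mul_nonneg (by positivity) hgL
  have hbL : L ≤ b * L := le_mul_of_one_le_left (zero_le_one.trans hL) hb.le
  have hrange : ∀ k : ℕ, ∀ y ∈ Icc 1 (b ^ k * (b * L)), b ^ (-σ) * g L * y ^ (-σ) ≤ g y := by
    intro k
    induction k with
    | zero =>
      rintro y ⟨hy1, hy⟩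
      rw [pow_zero, one_mul] at hy
      calc b ^ (-σ) * g L * y ^ (-σ)
          ≤ b ^ (-σ) * g L :=
            mul_le_of_le_one_right hC (rpow_le_one_of_one_le_of_nonpos hy1 (by linarith))
        _ ≤ g (b * L) := hdoubling L le_rfl
        _ ≤ g y := hg hy1 (hL.trans hbL) hy
    | succ k ih =>
      rintro y ⟨hy1, hy⟩
      rcases le_or_gt y (b ^ k * (b * L)) with hyk | hyk
      · exact ih y ⟨hy1, hyk⟩
      set x := y / b with hx
      have hxy : y = b * x := by rw [hx, mul_div_cancel₀ _ hb0.ne']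
      have hLx : L ≤ x := by
        rw [hx, le_div_iff₀ hb0, mul_comm]
        exact (le_mul_of_one_le_left (by positivity) (one_le_pow₀ hb.le)).trans hyk.le
      have hxk : x ≤ b ^ k * (b * L) := by
        rw [hx, div_le_iff₀ hb0]
        calc y ≤ b ^ (k + 1) * (b * L) := hy
          _ = b ^ k * (b * L) * b := by ring
      calc b ^ (-σ) * g L * y ^ (-σ)
          = b ^ (-σ) * (b ^ (-σ) * g L * x ^ (-σ)) := by
            rw [hxy, mul_rpow hb0.le (by linarith)]; ring
        _ ≤ b ^ (-σ) * g x := by gcongr; exact ih x ⟨hL.trans hLx, hxk⟩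
        _ ≤ g y := hxy ▸ hdoubling x hLx
  intro y hy
  obtain ⟨k, hk⟩ := pow_unbounded_of_one_lt (y / (b * L)) hb
  exact hrange k y ⟨hy, (div_lt_iff₀ (by positivity)).mp hk |>.le⟩

theorem exists_pos_rpow_neg_le {b ε : ℝ} (hb : 1 < b) (hε : 0 < ε) :
    ∃ σ > (0:ℝ), b ^ (-σ) ≤ ε := by
  refine ⟨max (1:ℝ) (-logb b ε), by positivity, ?_⟩
  calc b ^ (-max (1:ℝ) (-logb b ε)) ≤ b ^ logb b ε :=
        rpow_le_rpow_of_exponent_le hb.le (by linarith [le_max_right (1:ℝ) (-logb b ε)])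
    _ = ε := rpow_logb (by linarith) hb.ne' hε

theorem mul_le_comp_exp_neg_two_mul {h : ℝ → ℝ} {ε δ : ℝ} (hpos : ∀ ζ ∈ Ioc (0:ℝ) 1, 0 < h ζ)
    (hδ : 0 < δ) (hsqrt : ∀ ζ ∈ Ioo (0:ℝ) δ, ε ≤ h ζ / h (ζ ^ (1/2 : ℝ))) :
    ∀ y ≥ max 1 (-log δ), ε * h (exp (-y)) ≤ h (exp (-(2 * y))) := by
  intro y hy
  have hy1 : 1 ≤ y := le_of_max_le_left hy
  have hsmall : exp (-(2 * y)) ∈ Ioo 0 δ := by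
    refine ⟨exp_pos _, ?_⟩
    rw [← exp_log hδ, exp_lt_exp]
    linarith [le_of_max_le_right hy]
  have hroot : exp (-(2 * y)) ^ (1/2 : ℝ) = exp (-y) := by
    rw [← exp_mul]; ring_nf
  have hmem : exp (-y) ∈ Ioc 0 1 := ⟨exp_pos _, exp_le_one_iff.mpr (by linarith)⟩
  have := hsqrt _ hsmall
  rwa [hroot, le_div_iff₀ (hpos _ hmem)] at this

theorem lemma_3_3_second_general
    (h : ℝ → ℝ) (hmono : MonotoneOn h (Ioc 0 1))
    (hpos : ∀ ζ ∈ Ioc (0:ℝ) 1, 0 < h ζ)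
    (hliminf : ∀ κ ∈ Ioo (0:ℝ) 1, ∃ ε > (0:ℝ), ∃ δ ∈ Ioo (0:ℝ) 1,
      ∀ ζ ∈ Ioo (0:ℝ) δ, ε ≤ h ζ / h (ζ ^ κ)) :
    ∃ C > (0:ℝ), ∃ σ > (0:ℝ), ∀ ζ ≥ Real.exp 1,
      C * Real.log ζ ^ (-σ) ≤ h (1 / ζ) := by
  obtain ⟨ε, hε, δ, hδ, hsqrt⟩ := hliminf (1/2) ⟨by norm_num, by norm_num⟩
  obtain ⟨σ, hσ, hσε⟩ := exists_pos_rpow_neg_le one_lt_two hε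
  set L := max 1 (-log δ)
  have hL : 1 ≤ L := le_max_left _ _
  have hexp_mem : ∀ y ≥ (0:ℝ), exp (-y) ∈ Ioc 0 1 :=
    fun y hy => ⟨exp_pos _, exp_le_one_iff.mpr (by linarith)⟩
  have hanti : AntitoneOn (fun y => h (exp (-y))) (Ici 1) := fun x hx y hy hxy =>
    hmono (hexp_mem y (by linarith [mem_Ici.mp hy])) (hexp_mem x (by linarith [mem_Ici.mp hx]))
      (exp_le_exp.mpr (neg_le_neg hxy))
  have hdoubling : ∀ y ≥ L, (2:ℝ) ^ (-σ) * h (exp (-y)) ≤ h (exp (-(2 * y))) := fun y hy =>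
    calc (2:ℝ) ^ (-σ) * h (exp (-y)) ≤ ε * h (exp (-y)) :=
          mul_le_mul_of_nonneg_right hσε (hpos _ (hexp_mem y (by linarith))).le
      _ ≤ h (exp (-(2 * y))) := mul_le_comp_exp_neg_two_mul hpos hδ.1 hsqrt y hy
  have hhL : 0 < h (exp (-L)) := hpos _ (hexp_mem L (by linarith))
  refine ⟨2 ^ (-σ) * h (exp (-L)), by positivity, σ, hσ, fun ζ hζ => ?_⟩
  have hζ0 : 0 < ζ := (exp_pos 1).trans_le hζ
  have hlog : 1 ≤ log ζ := by rwa [le_log_iff_exp_le hζ0]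
  have := mul_rpow_neg_le_of_le_comp_mul one_lt_two hσ.le hL hhL.le hanti hdoubling (log ζ) hlog
  rwa [exp_neg (log ζ), exp_log hζ0, ← one_div] at this

/-- **Lemma 3.3**, second inequality: a non-decreasing continuous
`h : (0,1] → (0,∞)` with `liminf_{ζ→0⁺} h(ζ)/h(ζ^κ) > 0` for every `κ ∈ (0,1)`
decays at most logarithmically at zero. -/
theorem lemma_3_3_second
    (h : ℝ → ℝ) (hmono : MonotoneOn h (Ioc 0 1)) (hcont : ContinuousOn h (Ioc 0 1))
    (hpos : ∀ ζ ∈ Ioc (0:ℝ) 1, 0 < h ζ)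
    (hliminf : ∀ κ ∈ Ioo (0:ℝ) 1, ∃ ε > (0:ℝ), ∃ δ ∈ Ioo (0:ℝ) 1,
      ∀ ζ ∈ Ioo (0:ℝ) δ, ε ≤ h ζ / h (ζ ^ κ)) :
    ∃ C > (0:ℝ), ∃ σ > (0:ℝ), ∀ ζ ≥ Real.exp 1,
      C * Real.log ζ ^ (-σ) ≤ h (1 / ζ) :=
  lemma_3_3_second_general h hmono hpos hliminf
end
end
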